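/- arXiv:1805.04746 — 5 statements merged into one kernel-verified Lean document; each statement's English description precedes it below -/
import Mathlib

section
/- Let k ≥ 1 and let A = ℤ[t₁^{±1},…,t_{2k}^{±1}] be the Laurent polynomial ring, with the bar involution given by the ring automorphism sending tᵢ ↦ tᵢ⁻¹. Set s := t₁⋯t_{2k} and P := (1−t₁)⋯(1−t_{2k})·(1−s⁻¹). Then for every W ∈ A, the element V := W − W̄ + W·W̄·P satisfies V̄ = −V; in particular the constant coefficient (coefficient of the monomial t⁰ = 1) of V is 0. -/
/-!
STATEMENT 1: Let k ≥ 1 and A = ℤ[t₁^{±1},…,t_{2k}^{±1}] with the bar involution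
tᵢ ↦ tᵢ⁻¹.  Set s := t₁⋯t_{2k} and P := (1−t₁)⋯(1−t_{2k})·(1−s⁻¹).  Then for every
W ∈ A, V := W − W̄ + W·W̄·P satisfies V̄ = −V; in particular the constant
coefficient of V is 0.

We model A as the group algebra `AddMonoidAlgebra ℤ (Fin (2*k) → ℤ)`:
a monomial t^w corresponds to `Finsupp.single w 1`.  The bar involution is the
ring (algebra) automorphism induced by negation on the exponent group; note that
s⁻¹ is the monomial t^{(-1,…,-1)}.
-/

/-- Laurent polynomials ℤ[t₁^{±1},…,t_n^{±1}]. -/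
abbrev Laurent (n : ℕ) := AddMonoidAlgebra ℤ (Fin n → ℤ)

/-- The bar involution tᵢ ↦ tᵢ⁻¹, i.e. the ring automorphism induced by
negation on exponents. -/
noncomputable def bar (n : ℕ) : Laurent n ≃ₐ[ℤ] Laurent n :=
  AddMonoidAlgebra.domCongr ℤ ℤ (AddEquiv.neg (Fin n → ℤ))

/-- The variable tᵢ. -/
noncomputable def tvar {n : ℕ} (i : Fin n) : Laurent n :=
  AddMonoidAlgebra.single (Pi.single i 1) 1

/-- The monomial s⁻¹ = (t₁⋯t_n)⁻¹ = t₁⁻¹⋯t_n⁻¹. -/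
noncomputable def sInv (n : ℕ) : Laurent n := AddMonoidAlgebra.single (fun _ => (-1 : ℤ)) 1

/-!
Since `1 - t̄ᵢ = -t̄ᵢ (1 - tᵢ)` and `1 - s = -s (1 - s⁻¹)` with `∏ t̄ᵢ = s⁻¹`, the bar involution
sends `P` to `(-1)^(n+1) P`, hence to `-P` when `n = 2k`. For any ring involution `σ` with
`σ P = -P`, the element `W - σ W + W σ(W) P` is anti-invariant. The constant coefficient is fixed by the
bar involution, so on an anti-invariant element it equals its own negative, hence vanishes in `ℤ`.
-/

theorem map_sub_map_add_mul_map_mul_eq_neg {R F : Type*} [CommRing R] [FunLike F R R]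
    [RingHomClass F R R] (σ : F) (hσ : Function.Involutive σ) {P : R} (hP : σ P = -P) (W : R) :
    σ (W - σ W + W * σ W * P) = -(W - σ W + W * σ W * P) := by
  rw [map_add, map_sub, map_mul, map_mul, hσ W, hP]
  ring

open AddMonoidAlgebra

namespace Laurent

variable {n : ℕ}

theorem bar_single (w : Fin n → ℤ) (c : ℤ) : bar n (single w c) = single (-w) c := by
  simp [bar]

theorem bar_involutive : Function.Involutive (bar n) := fun x => by
  ext; simp [bar]

theorem coeff_bar_zero (x : Laurent n) : (bar n x).coeff 0 = x.coeff 0 := by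
  simp [bar]

theorem coeff_zero_eq_zero_of_bar_eq_neg {x : Laurent n} (h : bar n x = -x) : x.coeff 0 = 0 := by
  have h0 := coeff_bar_zero x
  rw [h, coeff_neg] at h0
  change -(x.coeff 0) = x.coeff 0 at h0
  omega

theorem tvar_mul_bar_tvar (i : Fin n) : tvar i * bar n (tvar i) = 1 := by
  rw [tvar, bar_single, single_mul_single]
  simp [one_def]

theorem prod_bar_tvar : ∏ i, bar n (tvar i) = sInv n := by
  simp only [tvar, bar_single]
  rw [prod_single]
  congr 1
  · funext j
    simp [Finset.sum_apply, Pi.single_apply]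
  · simp

theorem sInv_mul_bar_sInv : sInv n * bar n (sInv n) = 1 := by
  rw [sInv, bar_single, single_mul_single]
  simp [one_def]

theorem bar_prod_one_sub_tvar :
    bar n (∏ i, (1 - tvar i)) = (-1) ^ n * sInv n * ∏ i, (1 - tvar i) := by
  have h (i : Fin n) : bar n (1 - tvar i) = -1 * bar n (tvar i) * (1 - tvar i) := by
    rw [map_sub, map_one]
    linear_combination (-1 : Laurent n) * tvar_mul_bar_tvar i
  rw [map_prod, Finset.prod_congr rfl fun i _ => h i, Finset.prod_mul_distrib,
    Finset.prod_mul_distrib, prod_bar_tvar, Finset.prod_const, Finset.card_univ, Fintype.card_fin]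

theorem bar_prod_one_sub_tvar_mul_one_sub_sInv :
    bar n ((∏ i, (1 - tvar i)) * (1 - sInv n)) =
      (-1) ^ (n + 1) * ((∏ i, (1 - tvar i)) * (1 - sInv n)) := by
  rw [map_mul, bar_prod_one_sub_tvar, map_sub, map_one]
  linear_combination -(-1) ^ n * (∏ i, (1 - tvar i)) * sInv_mul_bar_sInv (n := n)

end Laurent

theorem stmt_1_general (k : ℕ) (W V : Laurent (2*k))
    (hV : V = W - bar _ W + W * bar _ W *
      ((∏ i, (1 - tvar i)) * (1 - sInv (2*k)))) :
    bar _ V = -V ∧ (V.coeff : (Fin (2*k) → ℤ) →₀ ℤ) 0 = 0 := by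
  have hP := Laurent.bar_prod_one_sub_tvar_mul_one_sub_sInv (n := 2 * k)
  rw [pow_succ, pow_mul, neg_one_sq, one_pow, one_mul, neg_one_mul] at hP
  have hV' : bar _ V = -V :=
    hV ▸ map_sub_map_add_mul_map_mul_eq_neg (bar _) Laurent.bar_involutive hP W
  exact ⟨hV', Laurent.coeff_zero_eq_zero_of_bar_eq_neg hV'⟩

theorem stmt_1 (k : ℕ) (hk : 1 ≤ k) (W V : Laurent (2*k))
    (hV : V = W - bar _ W + W * bar _ W *
      ((∏ i, (1 - tvar i)) * (1 - sInv (2*k)))) :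
    bar _ V = -V ∧ (V.coeff : (Fin (2*k) → ℤ) →₀ ℤ) 0 = 0 :=
  stmt_1_general k W V hV
end

section
/- Let k ≥ 1, set d = 2k+1, and let π be a (d−1)-partition. Let W_π ∈ ℤ[t₁^{±1},…,t_{2k}^{±1}] be W_π = Σ_{i₁,…,i_{2k} ≥ 1} Σ_{m=1}^{π(i₁,…,i_{2k})} t₁^{i₁−1}⋯t_{2k}^{i_{2k}−1}·(t₁⋯t_{2k})^{−(m−1)}, and set V_π := W_π − W̄_π + W_π·W̄_π·(1−t₁)⋯(1−t_{2k})·(1−(t₁⋯t_{2k})⁻¹). Write V_π = Σ_{w ∈ ℤ^{2k}} a_w·t^w with finitely many a_w ≠ 0. Then a₀ = 0, and in the rational function field ℚ(λ₁,…,λ_{2k}) one has Π_{w ≠ 0} (w₁λ₁ + ⋯ + w_{2k}λ_{2k})^{a_w} = (−1)^{|π|}. -/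
/-!
STATEMENT 4: Let k ≥ 1, d = 2k+1, π a (d−1)-partition, and in
ℤ[t₁^{±1},…,t_{2k}^{±1}] set
W_π = Σ_{i₁,…,i_{2k} ≥ 1} Σ_{m=1}^{π(i)} t₁^{i₁−1}⋯t_{2k}^{i_{2k}−1}·(t₁⋯t_{2k})^{−(m−1)},
V_π := W_π − W̄_π + W_π·W̄_π·(1−t₁)⋯(1−t_{2k})·(1−(t₁⋯t_{2k})⁻¹) = Σ_w a_w·t^w.
Then a₀ = 0 and Π_{w ≠ 0} (w₁λ₁+⋯+w_{2k}λ_{2k})^{a_w} = (−1)^{|π|} in ℚ(λ₁,…,λ_{2k}).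

The Laurent ring is modelled as `AddMonoidAlgebra ℤ (Fin (2*k) → ℤ)`, with the bar
involution induced by negation on exponents; partitions are modelled 0-indexed, so
W_π = Σ_{i ∈ ℕ^{2k}} Σ_{m=0}^{π(i)−1} t^i·(t₁⋯t_{2k})^{−m}.  The field
ℚ(λ₁,…,λ_{2k}) is the fraction field of `MvPolynomial (Fin (2*k)) ℚ`, and the
product (with integer exponents, via `zpow`) is a `finprod` over all w ≠ 0.
-/

/-- An `n`-partition: a function π : ℕⁿ → ℕ (0-indexed version of (ℤ_{≥1})ⁿ → ℕ),
weakly decreasing in each coordinate and with finite support. -/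
structure NPartition (n : ℕ) where
  toFun : (Fin n → ℕ) → ℕ
  antitone : ∀ ⦃i j : Fin n → ℕ⦄, (∀ a, i a ≤ j a) → toFun j ≤ toFun i
  finite : (Function.support toFun).Finite

/-- The size |π| = Σ_i π(i). -/
noncomputable def NPartition.size {n : ℕ} (π : NPartition n) : ℕ := ∑ᶠ i, π.toFun i

/-- The character W_π of the monomial subscheme attached to a 2k-partition π, after
the Calabi–Yau specialization t_{2k+1} = (t₁⋯t_{2k})⁻¹. -/
noncomputable def Wpi (k : ℕ) (π : NPartition (2 * k)) : Laurent (2 * k) :=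
  ∑ᶠ i : Fin (2 * k) → ℕ, ∑ m ∈ Finset.range (π.toFun i),
    AddMonoidAlgebra.single (fun a => (i a : ℤ) - (m : ℤ)) (1 : ℤ)

/-- The equivariant vertex V_π (after the Calabi–Yau specialization). -/
noncomputable def Vpi (k : ℕ) (π : NPartition (2 * k)) : Laurent (2 * k) :=
  Wpi k π - bar _ (Wpi k π) +
    Wpi k π * bar _ (Wpi k π) * ((∏ i, (1 - tvar i)) * (1 - sInv (2 * k)))

/-- The field ℚ(λ₁,…,λ_n). -/
abbrev RatFn (n : ℕ) := FractionRing (MvPolynomial (Fin n) ℚ)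

/-- The variable λᵢ of ℚ(λ₁,…,λ_n). -/
noncomputable def lam {n : ℕ} (i : Fin n) : RatFn n :=
  algebraMap (MvPolynomial (Fin n) ℚ) (RatFn n) (MvPolynomial.X i)

/-!
Put G = W + W·W̄·∏(1 - tᵢ). Since n = 2k is even, the bar of ∏(1 - tᵢ) is (t₁⋯tₙ)⁻¹·∏(1 - tᵢ),
so V = G - Ḡ. Hence a₀ = 0, and since the linear form ⟨w, λ⟩ is odd in w, the product over
w ≠ 0 collapses to the sign (-1)^(Σ_{w ≠ 0} G_w) = (-1)^(G(1) - G₀). Evaluating at t = 1 kills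
∏(1 - tᵢ), so G(1) = W(1) = |π|. Finally G₀ is even: modulo 2 the constant term of W·W̄·∏(1 - tᵢ)
counts the pairs of boxes whose weights differ by a vertex of the unit cube, and two
fixed-point-free involutions reduce these pairs to the pairs ((0, 0), b) with b a box of
weight 0, which are also counted by W₀.
-/

open Finset AddMonoidAlgebra

section Laurent

variable {n : ℕ}

lemma bar_single (x : Fin n → ℤ) (a : ℤ) : bar n (single x a) = single (-x) a :=
  domCongr_single _ x a

lemma coeff_bar (f : Laurent n) (w : Fin n → ℤ) : (bar n f).coeff w = f.coeff (-w) := by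
  simp [bar, coeff_domCongr]

lemma bar_bar (f : Laurent n) : bar n (bar n f) = f := by
  ext w
  rw [coeff_bar, coeff_bar, neg_neg]

lemma bar_one_sub_tvar (i : Fin n) :
    bar n (1 - tvar i) = -single (-Pi.single i 1) 1 * (1 - tvar i) := by
  rw [map_sub, map_one, tvar, bar_single, neg_mul, mul_sub, single_mul_single, mul_one, one_mul,
    neg_add_cancel, ← one_def]
  ring

lemma bar_prod_one_sub_tvar (hn : Even n) :
    bar n (∏ i, (1 - tvar i)) = sInv n * ∏ i, (1 - tvar i) := by
  simp_rw [map_prod, bar_one_sub_tvar, prod_mul_distrib, prod_neg, prod_single, prod_const_one,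
    card_univ, Fintype.card_fin, hn.neg_one_pow, one_mul, sInv]
  congr
  ext a
  simp [Finset.sum_apply, Pi.single_apply]

def IsCubeVertex (v : Fin n → ℤ) : Prop := ∀ a, v a = 0 ∨ v a = 1

instance : DecidablePred (IsCubeVertex (n := n)) := fun v => by
  unfold IsCubeVertex; infer_instance

lemma sum_pi_single_one_apply (t : Finset (Fin n)) (a : Fin n) :
    (∑ i ∈ t, Pi.single i 1 : Fin n → ℤ) a = if a ∈ t then 1 else 0 := by
  rw [Finset.sum_apply, sum_pi_single]

lemma isCubeVertex_iff_mem_image (v : Fin n → ℤ) :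
    IsCubeVertex v ↔ v ∈ (univ.powerset.image fun t => ∑ i ∈ t, Pi.single i 1) := by
  simp only [mem_image, mem_powerset, subset_univ, true_and, funext_iff, sum_pi_single_one_apply]
  constructor
  · intro hv
    refine ⟨univ.filter fun a => v a = 1, fun a => ?_⟩
    rcases hv a with h | h <;> simp [h]
  · rintro ⟨t, ht⟩ a
    rw [← ht a]
    split_ifs <;> simp

lemma coeff_prod_one_sub_tvar (v : Fin n → ℤ) :
    ((∏ i, (1 - tvar i) : Laurent n).coeff v : ZMod 2) = if IsCubeVertex v then 1 else 0 := by
  have hinj : Set.InjOn (fun t : Finset (Fin n) => (∑ i ∈ t, Pi.single i 1 : Fin n → ℤ))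
      ↑(univ.powerset : Finset (Finset (Fin n))) := by
    intro s _ t _ hst
    ext a
    have h := congrFun hst a
    simp only [sum_pi_single_one_apply] at h
    split_ifs at h <;> simp_all
  simp_rw [sub_eq_add_neg, tvar, ← single_neg, prod_one_add, prod_single, prod_const, coeff_sum,
    coeff_single, Finsupp.finsetSum_apply, Finsupp.single_apply, Int.cast_sum,
    apply_ite (Int.cast : ℤ → ZMod 2), Int.cast_pow, Int.cast_neg, Int.cast_one,
    show (-1 : ZMod 2) = 1 from rfl, one_pow, Int.cast_zero]
  rw [← sum_image (g := fun t : Finset (Fin n) => (∑ i ∈ t, Pi.single i 1 : Fin n → ℤ))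
    (f := fun x => if x = v then (1 : ZMod 2) else 0) hinj, sum_ite_eq']
  simp_rw [isCubeVertex_iff_mem_image]

noncomputable def augmentation (n : ℕ) : Laurent n →ₐ[ℤ] ℤ := lift ℤ ℤ (Fin n → ℤ) 1

lemma augmentation_single (x : Fin n → ℤ) (a : ℤ) : augmentation n (single x a) = a := by
  simp [augmentation]

lemma augmentation_apply (f : Laurent n) : augmentation n f = f.coeff.sum fun _ a => a := by
  simp [augmentation, lift_apply]

lemma augmentation_prod_one_sub_tvar (hn : n ≠ 0) : augmentation n (∏ i, (1 - tvar i)) = 0 := by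
  simp [tvar, augmentation_single, hn]

end Laurent

lemma card_eq_card_filter_of_involution {X : Type*} (s : Finset X) (p : X → Prop)
    [DecidablePred p] (ι : X → X) (h_mem : ∀ x ∈ s, ¬p x → ι x ∈ s ∧ ¬p (ι x))
    (h_invol : ∀ x ∈ s, ¬p x → ι (ι x) = x) (h_ne : ∀ x ∈ s, ¬p x → ι x ≠ x) :
    (#s : ZMod 2) = #(s.filter p) := by
  have h_even : (#(s.filter fun x => ¬p x) : ZMod 2) = 0 := by
    rw [card_eq_sum_ones, Nat.cast_sum]
    refine sum_involution (fun x _ => ι x) (fun _ _ => by decide)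
      (fun x hx _ => h_ne x (mem_filter.1 hx).1 (mem_filter.1 hx).2) (fun x hx => ?_)
      (fun x hx => h_invol x (mem_filter.1 hx).1 (mem_filter.1 hx).2)
    exact mem_filter.2 (h_mem x (mem_filter.1 hx).1 (mem_filter.1 hx).2)
  rw [← card_filter_add_card_filter_not p, Nat.cast_add, h_even, add_zero]

-- The box (i, m), with m < π(i), of the diagram of π contributes t^i·(t₁⋯tₙ)^(-m) to W.
abbrev Box (n : ℕ) := (Fin n → ℕ) × ℕ

def boxWeight {n : ℕ} (b : Box n) : Fin n → ℤ := fun a => b.1 a - b.2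

namespace NPartition

variable {n : ℕ} (π : NPartition n)

noncomputable def boxes : Finset (Box n) :=
  (π.finite.toFinset ×ˢ range (π.finite.toFinset.sup π.toFun)).filter fun b => b.2 < π.toFun b.1

variable {π} in
lemma mem_boxes {b : Box n} : b ∈ π.boxes ↔ b.2 < π.toFun b.1 := by
  refine ⟨fun h => (mem_filter.1 h).2, fun h => mem_filter.2 ⟨mem_product.2 ⟨?_, ?_⟩, h⟩⟩
  · simpa using (Nat.zero_le _).trans_lt h |>.ne'
  · exact mem_range.2 (h.trans_le (le_sup (by simpa using (Nat.zero_le _).trans_lt h |>.ne')))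

lemma sum_boxes {M : Type*} [AddCommMonoid M] (g : Box n → M) :
    ∑ b ∈ π.boxes, g b = ∑ᶠ i, ∑ m ∈ range (π.toFun i), g (i, m) := by
  rw [finsum_eq_sum_of_support_subset _ (s := π.finite.toFinset) fun i hi => ?_]
  · rw [boxes, sum_filter, sum_product]
    refine sum_congr rfl fun i hi => ?_
    rw [← sum_filter]
    congr 1
    ext m
    simp only [mem_filter, mem_range, and_iff_right_iff_imp]
    exact fun h => h.trans_le (le_sup hi)
  · contrapose! hi
    simp_all

lemma card_boxes : #π.boxes = π.size := by
  rw [card_eq_sum_ones, sum_boxes, NPartition.size]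
  simp

noncomputable def character : Laurent n := ∑ b ∈ π.boxes, single (boxWeight b) 1

lemma augmentation_character : augmentation n π.character = π.size := by
  simp [character, augmentation_single, card_boxes]

lemma coeff_character (w : Fin n → ℤ) :
    π.character.coeff w = #(π.boxes.filter fun b => boxWeight b = w) := by
  simp [character, coeff_sum, coeff_single, Finsupp.single_apply]

noncomputable def cubePairs : Finset (Box n × Box n) :=
  (π.boxes ×ˢ π.boxes).filter fun x => IsCubeVertex (boxWeight x.2 - boxWeight x.1)

variable {π} in
lemma mem_cubePairs {i j : Fin n → ℕ} {m l : ℕ} :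
    ((i, m), (j, l)) ∈ π.cubePairs ↔ m < π.toFun i ∧ l < π.toFun j ∧
      ∀ a, ((j a : ℤ) - l) - (i a - m) = 0 ∨ ((j a : ℤ) - l) - (i a - m) = 1 := by
  rw [cubePairs, mem_filter, mem_product, mem_boxes, mem_boxes, and_assoc]
  rfl

lemma coeff_zero_character_mul_bar_mul_prod :
    ((π.character * bar n π.character * ∏ i, (1 - tvar i)).coeff 0 : ZMod 2) = #π.cubePairs := by
  have h_prod : π.character * bar n π.character =
      ∑ x ∈ π.boxes ×ˢ π.boxes, single (boxWeight x.1 - boxWeight x.2) 1 := by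
    simp_rw [character, map_sum, bar_single, sum_mul_sum, sum_product, single_mul_single,
      mul_one, sub_eq_add_neg]
  simp_rw [h_prod, sum_mul, coeff_sum, Finsupp.finsetSum_apply, Int.cast_sum,
    coeff_single_mul_apply, one_mul, add_zero, neg_sub, coeff_prod_one_sub_tvar, sum_boole,
    cubePairs]

def IsGrounded (x : Box n × Box n) : Prop :=
  x.1.2 = 0 ∧ π.toFun x.2.1 - x.2.2 ≤ π.toFun x.1.1 - x.1.2

instance : DecidablePred π.IsGrounded := fun _ => by unfold IsGrounded; infer_instance

/- `π.toFun b.1 - b.2` counts the boxes of the column of `b` from `b` upwards. The box with the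
taller such column is moved (up or down by one) and the two boxes swap places, which replaces
the weight difference `v` by `1 - v`. -/
def swapShift (x : Box n × Box n) : Box n × Box n :=
  if π.toFun x.1.1 - x.1.2 < π.toFun x.2.1 - x.2.2 then ((x.2.1, x.2.2 + 1), x.1)
  else (x.2, (x.1.1, x.1.2 - 1))

def IsFlat (x : Box n × Box n) : Prop := ∀ a, x.2.1 a ≤ x.2.2

instance : DecidablePred (IsFlat (n := n)) := fun _ => by unfold IsFlat; infer_instance

-- For `x = ((i, m), (j, l))`, reflects `i a` about `j a - l - 1/2`; this toggles the `a`-th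
-- coordinate of the weight difference between 0 and 1.
def reflectAt (x : Box n × Box n) (a : Fin n) : Box n × Box n :=
  ((Function.update x.1.1 a (2 * (x.2.1 a - x.2.2) - 1 - x.1.1 a), x.1.2), x.2)

noncomputable def reflect (x : Box n × Box n) : Box n × Box n :=
  if h : ∃ a, x.2.2 < x.2.1 a then reflectAt x h.choose else x

section

variable {π} {i j : Fin n → ℕ} {m l : ℕ} {a : Fin n}

lemma swapShift_of_lt (h : π.toFun i - m < π.toFun j - l) :
    π.swapShift ((i, m), (j, l)) = ((j, l + 1), (i, m)) :=
  if_pos h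

lemma swapShift_of_le (h : π.toFun j - l ≤ π.toFun i - m) :
    π.swapShift ((i, m), (j, l)) = ((j, l), (i, m - 1)) :=
  if_neg h.not_gt

lemma swapShift_mem (hx : ((i, m), (j, l)) ∈ π.cubePairs)
    (hp : ¬π.IsGrounded ((i, m), (j, l))) :
    π.swapShift ((i, m), (j, l)) ∈ π.cubePairs ∧ ¬π.IsGrounded (π.swapShift ((i, m), (j, l))) := by
  obtain ⟨hm, hl, hd⟩ := mem_cubePairs.1 hx
  rcases lt_or_ge (π.toFun i - m) (π.toFun j - l) with h | h
  · rw [swapShift_of_lt h, mem_cubePairs]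
    refine ⟨⟨by omega, hm, fun a => ?_⟩, fun hg => (Nat.succ_ne_zero l) hg.1⟩
    have := hd a
    push_cast
    omega
  · have hm0 : m ≠ 0 := fun h0 => hp ⟨h0, h⟩
    rw [swapShift_of_le h, mem_cubePairs]
    refine ⟨⟨hl, by omega, fun a => ?_⟩, fun hg => ?_⟩
    · have := hd a
      push_cast [Nat.one_le_iff_ne_zero.2 hm0]
      omega
    · have := hg.2
      dsimp only at this
      omega

lemma swapShift_swapShift (hx : ((i, m), (j, l)) ∈ π.cubePairs)
    (hp : ¬π.IsGrounded ((i, m), (j, l))) :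
    π.swapShift (π.swapShift ((i, m), (j, l))) = ((i, m), (j, l)) := by
  obtain ⟨hm, hl, -⟩ := mem_cubePairs.1 hx
  rcases lt_or_ge (π.toFun i - m) (π.toFun j - l) with h | h
  · rw [swapShift_of_lt h, swapShift_of_le (by omega), Nat.add_sub_cancel]
  · have hm0 : m ≠ 0 := fun h0 => hp ⟨h0, h⟩
    rw [swapShift_of_le h, swapShift_of_lt (by omega), Nat.sub_add_cancel (by omega)]

lemma swapShift_ne (hp : ¬π.IsGrounded ((i, m), (j, l))) :
    π.swapShift ((i, m), (j, l)) ≠ ((i, m), (j, l)) := by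
  rcases lt_or_ge (π.toFun i - m) (π.toFun j - l) with h | h
  · rw [swapShift_of_lt h]
    simp only [ne_eq, Prod.mk.injEq, not_and]
    omega
  · have hm0 : m ≠ 0 := fun h0 => hp ⟨h0, h⟩
    rw [swapShift_of_le h]
    simp only [ne_eq, Prod.mk.injEq, not_and]
    omega

lemma reflectAt_mem (hx : ((i, 0), (j, l)) ∈ π.cubePairs) (ha : l < j a) :
    reflectAt ((i, 0), (j, l)) a ∈ π.cubePairs.filter π.IsGrounded := by
  obtain ⟨-, hl, hd⟩ := mem_cubePairs.1 hx
  set i' := Function.update i a (2 * (j a - l) - 1 - i a)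
  have hd' : ∀ b, ((j b : ℤ) - l) - (i' b - (0 : ℕ)) = 0 ∨ ((j b : ℤ) - l) - (i' b - (0 : ℕ)) = 1 := by
    intro b
    rcases eq_or_ne b a with rfl | hb
    · have := hd b
      simp only [i', Function.update_self]
      omega
    · simpa only [i', Function.update_of_ne hb] using hd b
  have hπ : π.toFun j ≤ π.toFun i' := π.antitone fun b => by have := hd' b; omega
  change ((i', 0), (j, l)) ∈ π.cubePairs.filter π.IsGrounded
  exact mem_filter.2 ⟨mem_cubePairs.2 ⟨by omega, hl, hd'⟩, rfl, by dsimp only; omega⟩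

lemma reflectAt_reflectAt (hx : ((i, 0), (j, l)) ∈ π.cubePairs) (ha : l < j a) :
    reflectAt (reflectAt ((i, 0), (j, l)) a) a = ((i, 0), (j, l)) := by
  obtain ⟨-, -, hd⟩ := mem_cubePairs.1 hx
  have := hd a
  simp only [reflectAt, Function.update_self, Function.update_idem, Prod.mk.injEq, and_true]
  rw [Nat.sub_sub_self (by omega), Function.update_eq_self]

lemma reflectAt_ne (ha : l < j a) : reflectAt ((i, 0), (j, l)) a ≠ ((i, 0), (j, l)) := by
  intro h
  have := congrFun (congrArg (·.1.1) h) a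
  simp only [reflectAt, Function.update_self] at this
  omega

lemma reflect_of_exists (h : ∃ a, l < j a) :
    reflect ((i, m), (j, l)) = reflectAt ((i, m), (j, l)) h.choose :=
  dif_pos h

lemma mem_grounded_flat_iff :
    ((i, m), (j, l)) ∈ (π.cubePairs.filter π.IsGrounded).filter IsFlat ↔
      m = 0 ∧ i = 0 ∧ l < π.toFun j ∧ ∀ a, j a = l := by
  simp only [mem_filter, mem_cubePairs, IsGrounded, IsFlat, funext_iff, Pi.zero_apply]
  constructor
  · rintro ⟨⟨⟨-, hl, hd⟩, rfl, -⟩, hf⟩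
    refine ⟨rfl, fun a => ?_, hl, fun a => ?_⟩ <;> have := hd a <;> have := hf a <;> omega
  · rintro ⟨rfl, hi, hl, hj⟩
    have h0 : π.toFun j ≤ π.toFun i := π.antitone fun a => by simp [hi a]
    refine ⟨⟨⟨by omega, hl, fun a => ?_⟩, rfl, by omega⟩, fun a => (hj a).le⟩
    simp [hi a, hj a]

lemma mem_boxes_weight_zero_iff :
    (j, l) ∈ π.boxes.filter (fun b => boxWeight b = 0) ↔ l < π.toFun j ∧ ∀ a, j a = l := by
  simp [mem_boxes, boxWeight, funext_iff, sub_eq_zero]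

end

lemma card_cubePairs_eq_card_grounded :
    (#π.cubePairs : ZMod 2) = #(π.cubePairs.filter π.IsGrounded) :=
  card_eq_card_filter_of_involution _ _ π.swapShift (fun _ hx hp => swapShift_mem hx hp)
    (fun _ hx hp => swapShift_swapShift hx hp) fun _ _ hp => swapShift_ne hp

lemma card_grounded_eq_card_flat :
    (#(π.cubePairs.filter π.IsGrounded) : ZMod 2) =
      #((π.cubePairs.filter π.IsGrounded).filter IsFlat) := by
  refine card_eq_card_filter_of_involution _ _ reflect ?_ ?_ ?_
  all_goals
    rintro ⟨⟨i, m⟩, ⟨j, l⟩⟩ hx hp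
    obtain ⟨hx, rfl, -⟩ := mem_filter.1 hx
    have h : ∃ a, l < j a := by simpa [IsFlat] using hp
    rw [reflect_of_exists h]
  · exact ⟨reflectAt_mem hx h.choose_spec, hp⟩
  · exact (reflect_of_exists h).trans (reflectAt_reflectAt hx h.choose_spec)
  · exact reflectAt_ne h.choose_spec

lemma card_flat_eq_card_weight_zero :
    #((π.cubePairs.filter π.IsGrounded).filter IsFlat) =
      #(π.boxes.filter fun b => boxWeight b = 0) := by
  refine card_nbij' Prod.snd (fun b => ((0, 0), b)) ?_ ?_ ?_ fun _ _ => rfl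
  · rintro ⟨⟨i, m⟩, ⟨j, l⟩⟩ hx
    obtain ⟨-, -, hl, hj⟩ := mem_grounded_flat_iff.1 hx
    exact mem_boxes_weight_zero_iff.2 ⟨hl, hj⟩
  · rintro ⟨j, l⟩ hb
    exact mem_grounded_flat_iff.2 ⟨rfl, rfl, mem_boxes_weight_zero_iff.1 hb⟩
  · rintro ⟨⟨i, m⟩, ⟨j, l⟩⟩ hx
    obtain ⟨rfl, rfl, -⟩ := mem_grounded_flat_iff.1 hx
    rfl

noncomputable def vertexHalf : Laurent n :=
  π.character + π.character * bar n π.character * ∏ i, (1 - tvar i)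

lemma even_coeff_zero_vertexHalf : Even (π.vertexHalf.coeff 0) := by
  have h : ((π.vertexHalf.coeff 0 : ℤ) : ZMod 2) = 0 := by
    rw [vertexHalf, coeff_add, Finsupp.add_apply, Int.cast_add,
      coeff_zero_character_mul_bar_mul_prod, card_cubePairs_eq_card_grounded,
      card_grounded_eq_card_flat, card_flat_eq_card_weight_zero, coeff_character, Int.cast_natCast]
    exact CharTwo.add_self_eq_zero _
  exact (ZMod.intCast_eq_zero_iff_even).1 h

lemma augmentation_vertexHalf (hn : n ≠ 0) : augmentation n π.vertexHalf = π.size := by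
  simp [vertexHalf, augmentation_character, augmentation_prod_one_sub_tvar hn]

end NPartition

lemma Wpi_eq_character (k : ℕ) (π : NPartition (2 * k)) : Wpi k π = π.character := by
  rw [NPartition.character, NPartition.sum_boxes]
  rfl

lemma zpow_sum₀ {K ι : Type*} [CommGroupWithZero K] {x : K} (hx : x ≠ 0) (s : Finset ι)
    (f : ι → ℤ) : x ^ (∑ i ∈ s, f i) = ∏ i ∈ s, x ^ f i := by
  induction s using Finset.cons_induction with
  | empty => simp
  | cons a s ha ih => rw [sum_cons, prod_cons, zpow_add₀ hx, ih]

section OddForm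

variable {Γ K : Type*} [AddGroup Γ] [Field K] {L : Γ → K}

lemma prod_zpow_sub_neg (hL_neg : ∀ w, L (-w) = -L w) {S : Finset Γ}
    (hS : ∀ w ∈ S, -w ∈ S) (hL : ∀ w ∈ S, L w ≠ 0) (f : Γ → ℤ) :
    ∏ w ∈ S, L w ^ (f w - f (-w)) = (-1) ^ ∑ w ∈ S, f w := by
  have h_reflect : ∏ w ∈ S, L w ^ f (-w) = ∏ w ∈ S, (-1) ^ f w * L w ^ f w := by
    refine prod_nbij' (fun w => -w) (fun w => -w) hS hS (fun w _ => neg_neg w)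
      (fun w _ => neg_neg w) fun w _ => ?_
    rw [hL_neg, ← mul_zpow, neg_one_mul, neg_neg]
  have h_ne : ∏ w ∈ S, L w ^ f w ≠ 0 := prod_ne_zero_iff.2 fun w hw => zpow_ne_zero _ (hL w hw)
  calc ∏ w ∈ S, L w ^ (f w - f (-w))
      = (∏ w ∈ S, L w ^ f w) / ∏ w ∈ S, L w ^ f (-w) := by
        rw [← prod_div_distrib]
        exact prod_congr rfl fun w hw => zpow_sub₀ (hL w hw) _ _
    _ = ((-1) ^ ∑ w ∈ S, f w)⁻¹ := by
        rw [h_reflect, prod_mul_distrib, ← zpow_sum₀ (by norm_num), div_mul_cancel_right₀ h_ne]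
    _ = _ := by rw [← inv_zpow, inv_neg_one]

theorem finprod_zpow_sub_neg (hL_neg : ∀ w, L (-w) = -L w) (hL : ∀ w ≠ 0, L w ≠ 0)
    (f : Γ →₀ ℤ) :
    ∏ᶠ (w) (_ : w ≠ 0), L w ^ (f w - f (-w)) = (-1) ^ (f.sum (fun _ a => a) - f 0) := by
  classical
  set S := (f.support ∪ f.support.image Neg.neg).erase 0 with hS
  have mem_S : ∀ w, w ∈ S ↔ w ≠ 0 ∧ (f w ≠ 0 ∨ f (-w) ≠ 0) := fun w => by
    simp only [hS, mem_erase, mem_union, Finsupp.mem_support_iff, mem_image]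
    constructor
    · rintro ⟨hw, h | ⟨u, hu, rfl⟩⟩
      · exact ⟨hw, .inl h⟩
      · exact ⟨hw, .inr (by rwa [neg_neg])⟩
    · rintro ⟨hw, h | h⟩
      · exact ⟨hw, .inl h⟩
      · exact ⟨hw, .inr ⟨-w, h, neg_neg w⟩⟩
  have h_sum : ∑ w ∈ S, f w = f.sum (fun _ a => a) - f 0 := by
    rw [f.sum_of_support_subset (s := insert 0 S) (fun w hw => ?_) _ (fun _ _ => rfl),
      sum_insert (by simp [hS])]
    · ring
    · by_cases h0 : w = 0
      · simp [h0]
      · exact mem_insert_of_mem ((mem_S w).2 ⟨h0, .inl (Finsupp.mem_support_iff.1 hw)⟩)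
  rw [finprod_cond_eq_prod_of_cond_iff _ (t := S) fun {w} hw => ?_, ← h_sum]
  · refine prod_zpow_sub_neg hL_neg (fun w hw => ?_) (fun w hw => hL w ((mem_S w).1 hw).1) f
    rw [mem_S] at hw ⊢
    rw [neg_neg, neg_ne_zero]
    exact ⟨hw.1, hw.2.symm⟩
  · refine ⟨fun h0 => (mem_S w).2 ⟨h0, ?_⟩, fun hw => ((mem_S w).1 hw).1⟩
    by_contra! h
    rw [h.1, h.2, sub_zero, zpow_zero] at hw
    exact hw rfl

end OddForm

lemma sum_zsmul_lam_neg {n : ℕ} (w : Fin n → ℤ) :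
    ∑ a, (-w) a • lam a = -∑ a, w a • lam a := by
  simp [neg_smul]

lemma sum_zsmul_lam_ne_zero {n : ℕ} {w : Fin n → ℤ} (hw : w ≠ 0) : ∑ a, w a • lam a ≠ 0 := by
  obtain ⟨a, ha⟩ := Function.ne_iff.1 hw
  have h_inj := IsFractionRing.injective (MvPolynomial (Fin n) ℚ) (RatFn n)
  simp only [lam]
  rw [← map_zero (algebraMap (MvPolynomial (Fin n) ℚ) (RatFn n))]
  simp_rw [← map_zsmul, ← map_sum, h_inj.ne_iff]
  intro h
  have := congrArg (MvPolynomial.eval (Pi.single a 1)) h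
  simp [Pi.single_apply] at this
  exact ha this

lemma Vpi_eq_sub_bar (k : ℕ) (π : NPartition (2 * k)) :
    Vpi k π = π.vertexHalf - bar _ π.vertexHalf := by
  rw [NPartition.vertexHalf, ← Wpi_eq_character, Vpi, map_add, map_mul, map_mul, bar_bar,
    bar_prod_one_sub_tvar (even_two_mul k)]
  ring

lemma coeff_Vpi (k : ℕ) (π : NPartition (2 * k)) (w : Fin (2 * k) → ℤ) :
    (Vpi k π).coeff w = π.vertexHalf.coeff w - π.vertexHalf.coeff (-w) := by
  rw [Vpi_eq_sub_bar, coeff_sub, Finsupp.sub_apply, coeff_bar]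

theorem stmt_4 (k : ℕ) (hk : 1 ≤ k) (π : NPartition (2 * k)) :
    (((Vpi k π).coeff : (Fin (2 * k) → ℤ) →₀ ℤ) 0 = 0) ∧
    (∏ᶠ (w : Fin (2 * k) → ℤ) (_ : w ≠ 0),
        (∑ a, w a • lam a) ^ (((Vpi k π).coeff : (Fin (2 * k) → ℤ) →₀ ℤ) w) =
      (-1 : RatFn (2 * k)) ^ π.size) := by
  refine ⟨by rw [coeff_Vpi, neg_zero, sub_self], ?_⟩
  simp_rw [coeff_Vpi]
  rw [finprod_zpow_sub_neg sum_zsmul_lam_neg (fun _ => sum_zsmul_lam_ne_zero), ← augmentation_apply,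
    π.augmentation_vertexHalf (by omega), zpow_sub₀ (by norm_num),
    π.even_coeff_zero_vertexHalf.neg_one_zpow, div_one, zpow_natCast]
end

section
/- Let R be a commutative ring, let d ≥ 3 be odd, and let λ₁,…,λ_d ∈ R with λ₁ + ⋯ + λ_d = 0. Then Π_{S ⊆ {1,…,d}, S ≠ ∅, |S| even} (Σ_{i ∈ S} λᵢ) = − Π_{S ⊆ {1,…,d}, |S| odd, |S| ≤ d−2} (Σ_{i ∈ S} λᵢ). -/
open Finset

lemma card_odd_subsets (d : ℕ) (hd : 1 ≤ d) :
    #((univ : Finset (Finset (Fin d))).filter (fun S => Odd #S)) = 2 ^ (d - 1) := by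
  classical
  haveI : Nonempty (Fin d) := Fin.pos_iff_nonempty.mp (by omega)
  have h0 : (∑ m ∈ (univ : Finset (Fin d)).powerset, (-1 : ℤ) ^ #m) = 0 :=
    sum_powerset_neg_one_pow_card_of_nonempty univ_nonempty
  rw [powerset_univ] at h0
  have hsplit := sum_filter_add_sum_filter_not (univ : Finset (Finset (Fin d)))
    (fun S => Odd #S) (fun m => (-1 : ℤ) ^ #m)
  have he : ∀ S ∈ (univ : Finset (Finset (Fin d))).filter (fun S => Odd #S),
      ((-1 : ℤ) ^ #S) = -1 := by
    intro S hS
    rw [mem_filter] at hS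
    exact Odd.neg_one_pow hS.2
  have ho : ∀ S ∈ (univ : Finset (Finset (Fin d))).filter (fun S => ¬ Odd #S),
      ((-1 : ℤ) ^ #S) = 1 := by
    intro S hS
    rw [mem_filter] at hS
    exact Even.neg_one_pow (Nat.not_odd_iff_even.mp hS.2)
  rw [sum_congr rfl he, sum_congr rfl ho, sum_const, sum_const] at hsplit
  rw [h0] at hsplit
  have hcard := card_filter_add_card_filter_not
    (s := (univ : Finset (Finset (Fin d)))) (p := fun S => Odd #S)
  rw [card_univ, Fintype.card_finset, Fintype.card_fin] at hcard
  set a := #((univ : Finset (Finset (Fin d))).filter (fun S => Odd #S))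
  set b := #((univ : Finset (Finset (Fin d))).filter (fun S => ¬ Odd #S))
  simp only [nsmul_eq_mul, mul_neg, mul_one] at hsplit
  have hab : (a : ℤ) = b := by linarith
  have : a = b := by exact_mod_cast hab
  have h2 : 2 ^ d = 2 * 2 ^ (d - 1) := by
    rw [← pow_succ']
    congr 1
    omega
  omega

theorem stmt_7 (R : Type*) [CommRing R] (d : ℕ) (hd : 3 ≤ d) (hodd : Odd d)
    (l : Fin d → R) (hl : ∑ i, l i = 0) :
    ∏ S ∈ (Finset.univ : Finset (Fin d)).powerset.filter
        (fun S => S ≠ ∅ ∧ Even S.card), (∑ i ∈ S, l i) =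
      - ∏ S ∈ (Finset.univ : Finset (Fin d)).powerset.filter
          (fun S => Odd S.card ∧ S.card ≤ d - 2), (∑ i ∈ S, l i) := by
  classical
  set A := (Finset.univ : Finset (Fin d)).powerset.filter
      (fun S => S ≠ ∅ ∧ Even S.card) with hA
  set B := (Finset.univ : Finset (Fin d)).powerset.filter
      (fun S => Odd S.card ∧ S.card ≤ d - 2) with hB
  have hcompl : ∀ S : Finset (Fin d), (∑ i ∈ Sᶜ, l i) = -(∑ i ∈ S, l i) := by
    intro S
    have h := Finset.sum_add_sum_compl S l
    rw [hl] at h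
    linear_combination h
  have key : ∏ S ∈ A, (∑ i ∈ S, l i) = ∏ S ∈ B, (-(∑ i ∈ S, l i)) := by
    refine Finset.prod_nbij' (fun S => Sᶜ) (fun S => Sᶜ) ?_ ?_ ?_ ?_ ?_
    · intro S hS
      rw [hA, mem_filter, mem_powerset] at hS
      rw [hB, mem_filter, mem_powerset]
      obtain ⟨-, hne, hev⟩ := hS
      have hpos : 2 ≤ #S := by
        rcases hev with ⟨k, hk⟩
        have : #S ≠ 0 := by simpa [card_eq_zero] using hne
        omega
      have hle : #S ≤ d := by simpa using card_le_univ S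
      refine ⟨subset_univ _, ?_, ?_⟩
      · rw [card_compl, Fintype.card_fin]
        rcases hodd with ⟨m, hm⟩
        rcases hev with ⟨k, hk⟩
        exact ⟨m - k, by omega⟩
      · rw [card_compl, Fintype.card_fin]; omega
    · intro S hS
      rw [hB, mem_filter, mem_powerset] at hS
      rw [hA, mem_filter, mem_powerset]
      obtain ⟨-, hoddS, hle⟩ := hS
      refine ⟨subset_univ _, ?_, ?_⟩
      · simp only [Ne, ← Finset.card_eq_zero, card_compl, Fintype.card_fin]
        omega
      · rw [card_compl, Fintype.card_fin]
        rcases hodd with ⟨m, hm⟩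
        rcases hoddS with ⟨k, hk⟩
        exact ⟨m - k, by omega⟩
    · intro S _; simp
    · intro S _; simp
    · intro S _
      rw [hcompl]; ring
  have hBeq : B = ((univ : Finset (Finset (Fin d))).filter
      (fun S => Odd #S)).erase (univ : Finset (Fin d)) := by
    ext S
    rw [hB, mem_filter, mem_powerset, mem_erase, mem_filter]
    constructor
    · rintro ⟨-, h1, h2⟩
      refine ⟨?_, mem_univ _, h1⟩
      intro h
      subst h
      rw [card_univ, Fintype.card_fin] at h2
      omega
    · rintro ⟨hne, -, h1⟩
      refine ⟨subset_univ _, h1, ?_⟩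
      have hlt : #S < d := by
        have := card_lt_card (lt_of_le_of_ne (subset_univ S) hne)
        rwa [card_univ, Fintype.card_fin] at this
      rcases hodd with ⟨m, hm⟩
      rcases h1 with ⟨k, hk⟩
      omega
  have hBcard : #B = 2 ^ (d - 1) - 1 := by
    rw [hBeq, card_erase_of_mem, card_odd_subsets d (by omega)]
    rw [mem_filter]
    refine ⟨mem_univ _, ?_⟩
    rw [card_univ, Fintype.card_fin]
    exact hodd
  have hBodd : Odd #B := by
    rw [hBcard]
    have h2 : 2 ^ (d - 1) = 2 * 2 ^ (d - 2) := by
      rw [← pow_succ']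
      congr 1
      omega
    have h3 : 1 ≤ 2 ^ (d - 2) := Nat.one_le_two_pow
    exact ⟨2 ^ (d - 2) - 1, by omega⟩
  rw [key]
  have hstep : ∀ S ∈ B, -(∑ i ∈ S, l i) = (-1 : R) * ∑ i ∈ S, l i := fun S _ => by ring
  rw [prod_congr rfl hstep, prod_mul_distrib, prod_const, hBodd.neg_one_pow]
  ring
end

section
/- Let R be a commutative ring, k ≥ 1, d = 4k, and let λ₁,…,λ_d ∈ R satisfy λ_d = 0 and λ₁ + ⋯ + λ_{d−1} = 0. Then (−1)^{C(4k−1,2k)} · ( Π_{i=1}^{k−1} Π_{S ⊆ {1,…,d}, |S| = 2i} λ_S )² · Π_{S ⊆ {1,…,d}, |S| = 2k} λ_S = ( Π_{i=1}^{k} Π_{S ⊆ {1,…,d}, |S| = 2i−1, S ≠ {d}} λ_S )², where λ_S := Σ_{j ∈ S} λ_j and C(a,b) is the binomial coefficient. -/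
/-!
STATEMENT 9: Let R be a commutative ring, k ≥ 1, d = 4k, and λ₁,…,λ_d ∈ R with
λ_d = 0 and λ₁ + ⋯ + λ_{d−1} = 0.  Then
  (−1)^{C(4k−1,2k)} · ( Π_{i=1}^{k−1} Π_{|S|=2i} λ_S )² · Π_{|S|=2k} λ_S
    = ( Π_{i=1}^{k} Π_{|S|=2i−1, S ≠ {d}} λ_S )²,
where S ranges over subsets of {1,…,d} and λ_S := Σ_{j ∈ S} λ_j.
-/

section aux

variable {α R : Type*} [DecidableEq α] [CommRing R]

/-- Splitting the product over `m+1`-subsets of `insert e V` according to membership of `e`,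
when `l e = 0`. -/
lemma splitA (l : α → R) (e : α) (V : Finset α) (he : e ∉ V) (hle : l e = 0) (n : ℕ) :
    ∏ S ∈ Finset.powersetCard (n + 1) (insert e V), (∑ j ∈ S, l j) =
      (∏ T ∈ Finset.powersetCard (n + 1) V, ∑ j ∈ T, l j) *
      (∏ T ∈ Finset.powersetCard n V, ∑ j ∈ T, l j) := by
  have hdisj : Disjoint (Finset.powersetCard (n + 1) V)
      ((Finset.powersetCard n V).image (insert e)) := by
    rw [Finset.disjoint_left]
    intro S hS hS'
    obtain ⟨T, hT, rfl⟩ := Finset.mem_image.mp hS'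
    have : e ∈ V := (Finset.mem_powersetCard.mp hS).1 (Finset.mem_insert_self e T)
    exact he this
  have hinj : ∀ T ∈ Finset.powersetCard n V, ∀ T' ∈ Finset.powersetCard n V,
      insert e T = insert e T' → T = T' := by
    intro T hT T' hT' h
    have heT : e ∉ T := fun hc => he ((Finset.mem_powersetCard.mp hT).1 hc)
    have heT' : e ∉ T' := fun hc => he ((Finset.mem_powersetCard.mp hT').1 hc)
    rw [← Finset.erase_insert heT, ← Finset.erase_insert heT', h]
  rw [Finset.powersetCard_succ_insert he, Finset.prod_union hdisj, Finset.prod_image hinj]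
  congr 1
  apply Finset.prod_congr rfl
  intro T hT
  have heT : e ∉ T := fun hc => he ((Finset.mem_powersetCard.mp hT).1 hc)
  rw [Finset.sum_insert heT, hle, zero_add]

/-- Complementation inside `V`, when the total sum over `V` is zero. -/
lemma complA (l : α → R) (V : Finset α) (hV : ∑ j ∈ V, l j = 0) (m n : ℕ)
    (hmn : m + n = V.card) :
    ∏ T ∈ Finset.powersetCard m V, (∑ j ∈ T, l j) =
      (-1) ^ (V.card.choose m) * ∏ T ∈ Finset.powersetCard n V, (∑ j ∈ T, l j) := by
  have key : ∀ T ∈ Finset.powersetCard m V,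
      (∑ j ∈ T, l j) = -(∑ j ∈ V \ T, l j) := by
    intro T hT
    have hsub := (Finset.mem_powersetCard.mp hT).1
    have h2 := Finset.sum_sdiff (f := l) hsub
    rw [hV] at h2
    linear_combination h2
  calc ∏ T ∈ Finset.powersetCard m V, (∑ j ∈ T, l j)
      = ∏ T ∈ Finset.powersetCard m V, (-1 : R) * (∑ j ∈ V \ T, l j) := by
        refine Finset.prod_congr rfl fun T hT => ?_
        rw [key T hT]; ring
    _ = (-1) ^ (V.card.choose m) * ∏ T ∈ Finset.powersetCard m V, (∑ j ∈ V \ T, l j) := by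
        rw [Finset.prod_mul_distrib, Finset.prod_const, Finset.card_powersetCard]
    _ = (-1) ^ (V.card.choose m) * ∏ T ∈ Finset.powersetCard n V, (∑ j ∈ T, l j) := by
        congr 1
        refine Finset.prod_nbij' (fun T => V \ T) (fun T => V \ T) ?_ ?_ ?_ ?_ ?_
        · intro T hT
          obtain ⟨hsub, hcard⟩ := Finset.mem_powersetCard.mp hT
          exact Finset.mem_powersetCard.mpr ⟨Finset.sdiff_subset,
            by rw [Finset.card_sdiff_of_subset hsub, hcard]; omega⟩
        · intro T hT
          obtain ⟨hsub, hcard⟩ := Finset.mem_powersetCard.mp hT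
          exact Finset.mem_powersetCard.mpr ⟨Finset.sdiff_subset,
            by rw [Finset.card_sdiff_of_subset hsub, hcard]; omega⟩
        · intro T hT
          exact Finset.sdiff_sdiff_eq_self (Finset.mem_powersetCard.mp hT).1
        · intro T hT
          exact Finset.sdiff_sdiff_eq_self (Finset.mem_powersetCard.mp hT).1
        · intro T hT; rfl

/-- final ring computation -/
lemma final_alg (x p b q : R) (hx : x * x = 1) (hpq : p * b = q) :
    x * p ^ 2 * (x * b * b) = q ^ 2 := by
  rw [← hpq]; linear_combination p ^ 2 * b ^ 2 * hx

end aux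

section tel

variable {M : Type*} [CommMonoid M]

lemma tel1 (f : ℕ → M) (n : ℕ) :
    ∏ i ∈ Finset.Icc 1 n, (f (2 * i) * f (2 * i - 1)) = ∏ m ∈ Finset.Icc 1 (2 * n), f m := by
  induction n with
  | zero => simp
  | succ n ih =>
    rw [Finset.prod_Icc_succ_top (show (1:ℕ) ≤ n + 1 by omega)]
    have h1 : 2 * (n + 1) = 2 * n + 1 + 1 := by ring
    have h2 : 2 * (n + 1) - 1 = 2 * n + 1 := by omega
    rw [h1, Nat.add_sub_cancel,
      Finset.prod_Icc_succ_top (show (1:ℕ) ≤ 2 * n + 1 + 1 by omega),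
      Finset.prod_Icc_succ_top (show (1:ℕ) ≤ 2 * n + 1 by omega), ih,
      mul_comm (f (2 * n + 1 + 1)) (f (2 * n + 1)), ← mul_assoc]

lemma tel2 (f : ℕ → M) (n : ℕ) (hn : 1 ≤ n) :
    f 1 * ∏ i ∈ Finset.Ioc 1 n, (f (2 * i - 1) * f (2 * i - 2)) =
      ∏ m ∈ Finset.Icc 1 (2 * n - 1), f m := by
  induction n, hn using Nat.le_induction with
  | base => simp
  | succ n hn ih =>
    rw [Finset.prod_Ioc_succ_top (show (1:ℕ) ≤ n by omega)]
    have h1 : 2 * (n + 1) - 1 = 2 * n + 1 := by omega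
    have h2 : 2 * (n + 1) - 2 = 2 * n := by omega
    have h3 : (2 * n : ℕ) = 2 * n - 1 + 1 := by omega
    rw [h1, h2, Finset.prod_Icc_succ_top (show (1:ℕ) ≤ 2 * n + 1 by omega), h3,
      Finset.prod_Icc_succ_top (show (1:ℕ) ≤ 2 * n - 1 + 1 by omega), ← h3, ← ih,
      mul_comm (f (2 * n + 1)) (f (2 * n)), ← mul_assoc, ← mul_assoc]

end tel

theorem stmt_9 (R : Type*) [CommRing R] (k : ℕ) (hk : 1 ≤ k)
    (l : Fin (4 * k) → R)
    (hlast : l ⟨4 * k - 1, by omega⟩ = 0)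
    (hsum : ∑ i ∈ Finset.univ.filter (fun i : Fin (4 * k) => (i : ℕ) < 4 * k - 1), l i = 0) :
    (-1 : R) ^ (Nat.choose (4 * k - 1) (2 * k)) *
      (∏ i ∈ Finset.Icc 1 (k - 1),
          ∏ S ∈ Finset.powersetCard (2 * i) (Finset.univ : Finset (Fin (4 * k))),
            (∑ j ∈ S, l j)) ^ 2 *
      (∏ S ∈ Finset.powersetCard (2 * k) (Finset.univ : Finset (Fin (4 * k))),
          (∑ j ∈ S, l j)) =
    (∏ i ∈ Finset.Icc 1 k,
        ∏ S ∈ (Finset.powersetCard (2 * i - 1)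
            (Finset.univ : Finset (Fin (4 * k)))).filter
              (fun S => S ≠ {⟨4 * k - 1, by omega⟩}),
          (∑ j ∈ S, l j)) ^ 2 := by
  have main : ∀ (e : Fin (4 * k)), (e : ℕ) = 4 * k - 1 → l e = 0 →
      (-1 : R) ^ (Nat.choose (4 * k - 1) (2 * k)) *
        (∏ i ∈ Finset.Icc 1 (k - 1),
            ∏ S ∈ Finset.powersetCard (2 * i) (Finset.univ : Finset (Fin (4 * k))),
              (∑ j ∈ S, l j)) ^ 2 *
        (∏ S ∈ Finset.powersetCard (2 * k) (Finset.univ : Finset (Fin (4 * k))),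
            (∑ j ∈ S, l j)) =
      (∏ i ∈ Finset.Icc 1 k,
          ∏ S ∈ (Finset.powersetCard (2 * i - 1)
              (Finset.univ : Finset (Fin (4 * k)))).filter
                (fun S => S ≠ {e}),
            (∑ j ∈ S, l j)) ^ 2 := by
    intro e heval hle
    set V : Finset (Fin (4 * k)) := Finset.univ.erase e with hVdef
    have heV : e ∉ V := Finset.notMem_erase _ _
    have hins : (Finset.univ : Finset (Fin (4 * k))) = insert e V :=
      (Finset.insert_erase (Finset.mem_univ e)).symm
    have hVcard : V.card = 4 * k - 1 := by
      rw [hVdef, Finset.card_erase_of_mem (Finset.mem_univ e), Finset.card_univ,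
        Fintype.card_fin]
    have hVsum : ∑ j ∈ V, l j = 0 := by
      have hVeq : V = Finset.univ.filter (fun i : Fin (4 * k) => (i : ℕ) < 4 * k - 1) := by
        ext i
        have hi := i.isLt
        simp only [hVdef, Finset.mem_erase, Finset.mem_filter, Finset.mem_univ, and_true,
          true_and, ne_eq, Fin.ext_iff, heval]
        omega
      rw [hVeq]; exact hsum
    set B : ℕ → R := fun m => ∏ T ∈ Finset.powersetCard m V, ∑ j ∈ T, l j with hB
    have hAm : ∀ n : ℕ, 1 ≤ n →
        ∏ S ∈ Finset.powersetCard n (Finset.univ : Finset (Fin (4 * k))), (∑ j ∈ S, l j) =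
          B n * B (n - 1) := by
      intro n hn
      obtain ⟨m, rfl⟩ : ∃ m, n = m + 1 := ⟨n - 1, by omega⟩
      rw [hins, splitA l e V heV hle m]
      simp only [hB, Nat.add_sub_cancel]
    -- left inner products
    have hL : ∀ i ∈ Finset.Icc 1 (k - 1),
        (∏ S ∈ Finset.powersetCard (2 * i) (Finset.univ : Finset (Fin (4 * k))),
          (∑ j ∈ S, l j)) = B (2 * i) * B (2 * i - 1) :=
      fun i hi => hAm (2 * i) (by simp only [Finset.mem_Icc] at hi; omega)
    -- right inner products, i ≥ 2
    have hR : ∀ i ∈ Finset.Ioc 1 k,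
        (∏ S ∈ (Finset.powersetCard (2 * i - 1)
            (Finset.univ : Finset (Fin (4 * k)))).filter (fun S => S ≠ {e}),
          (∑ j ∈ S, l j)) = B (2 * i - 1) * B (2 * i - 2) := by
      intro i hi
      simp only [Finset.mem_Ioc] at hi
      have hfilt : (Finset.powersetCard (2 * i - 1)
          (Finset.univ : Finset (Fin (4 * k)))).filter (fun S => S ≠ {e}) =
          Finset.powersetCard (2 * i - 1) (Finset.univ : Finset (Fin (4 * k))) := by
        apply Finset.filter_true_of_mem
        intro S hS hSe
        have hcard := (Finset.mem_powersetCard.mp hS).2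
        rw [hSe, Finset.card_singleton] at hcard
        omega
      rw [hfilt, hAm (2 * i - 1) (by omega)]
      congr 2
    -- right inner product, i = 1
    have hR1 : (∏ S ∈ (Finset.powersetCard (2 * 1 - 1)
        (Finset.univ : Finset (Fin (4 * k)))).filter (fun S => S ≠ {e}),
          (∑ j ∈ S, l j)) = B 1 := by
      have hfilt : (Finset.powersetCard (2 * 1 - 1)
          (Finset.univ : Finset (Fin (4 * k)))).filter (fun S => S ≠ {e}) =
          Finset.powersetCard 1 V := by
        norm_num
        ext S
        simp only [Finset.mem_filter, Finset.mem_powersetCard, Finset.subset_univ, true_and,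
          ne_eq]
        constructor
        · rintro ⟨hcard, hne⟩
          obtain ⟨a, rfl⟩ := Finset.card_eq_one.mp hcard
          refine ⟨Finset.singleton_subset_iff.mpr ?_, hcard⟩
          rw [hVdef]
          simp only [Finset.mem_erase, Finset.mem_univ, and_true]
          intro h; exact hne (by rw [h])
        · rintro ⟨hsub, hcard⟩
          refine ⟨hcard, fun h => ?_⟩
          have : e ∈ S := by rw [h]; exact Finset.mem_singleton_self e
          exact heV (hsub this)
      rw [hfilt]
    -- complement identity
    have hC : B (2 * k) = (-1 : R) ^ (Nat.choose (4 * k - 1) (2 * k)) * B (2 * k - 1) := by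
      have := complA l V hVsum (2 * k) (2 * k - 1) (by omega)
      rwa [hVcard] at this
    -- rewrite the goal
    rw [Finset.prod_congr rfl hL, hAm (2 * k) (by omega),
      Finset.Icc_eq_cons_Ioc hk, Finset.prod_cons, Finset.prod_congr rfl hR, hR1, hC]
    -- final computation
    apply final_alg
    · rw [← pow_add, ← two_mul, pow_mul]; norm_num
    · rw [tel1 B (k - 1), tel2 B k hk]
      have h1 : 2 * k - 1 = 2 * (k - 1) + 1 := by omega
      rw [h1, Finset.prod_Icc_succ_top (show (1:ℕ) ≤ 2 * (k - 1) + 1 by omega)]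
  exact main ⟨4 * k - 1, by omega⟩ rfl hlast
end

section
/- Let n ≥ 1. In the formal power series ring ℚ[[t,q]], one has Σ_π ω^c_π · t^{π(1,…,1)} · q^{|π|} = exp( t·(M_{n−1}(q) − 1) ), where the sum is over all n-partitions π (including the empty one), M₀(q) := Σ_{i ≥ 0} qⁱ, and for n ≥ 2, M_{n−1}(q) := Σ_{i ≥ 0} P_{n−1}(i)·qⁱ with P_{n−1}(i) the number of (n−1)-partitions of size i. (The sum is well defined since for each b there are only finitely many n-partitions of size b.) -/
/-- The binary representation of an (n−1)-partition ξ, as a function ℕⁿ → ℕ: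
value 1 at j iff j_n < ξ(j₁,…,j_{n−1}) (0-indexed), and 0 otherwise. -/
def binFun (n : ℕ) (hn : 1 ≤ n) (ξ : NPartition (n - 1)) : (Fin n → ℕ) → ℕ :=
  fun j => if j ⟨n - 1, by omega⟩ < ξ.toFun (fun a => j (Fin.castLE (Nat.sub_le n 1) a))
    then 1 else 0

/-- The set 𝒞_π of finitely supported ℕ-valued functions m on the nonempty
(n−1)-partitions such that π = Σ_ξ m_ξ · (binary representation of ξ). -/
def Cset (n : ℕ) (hn : 1 ≤ n) (π : NPartition n) :
    Set ({ξ : NPartition (n - 1) // ξ.toFun ≠ 0} → ℕ) :=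
  {m | (Function.support m).Finite ∧
    ∀ j : Fin n → ℕ, π.toFun j = ∑ᶠ ξ, m ξ * binFun n hn ξ.1 j}

/-- The combinatorial weight ω^c_π = Σ_{m ∈ 𝒞_π} Π_ξ 1/(m_ξ)!. -/
noncomputable def omegaC (n : ℕ) (hn : 1 ≤ n) (π : NPartition n) : ℚ :=
  ∑ᶠ m ∈ Cset n hn π, ∏ᶠ ξ, (1 / (Nat.factorial (m ξ)) : ℚ)

/-- The generating series M_n(q) = Σ_i P_n(i)·qⁱ of n-partitions. -/
noncomputable def Mser (n : ℕ) : PowerSeries ℚ :=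
  PowerSeries.mk fun i => (Nat.card {π : NPartition n // π.size = i} : ℚ)


/-!
Writing `π = Σ_ξ k_ξ · ξ̂` with `ξ̂` the binary representation of `ξ`, one has `π(0) = Σ k_ξ`
and `|π| = Σ k_ξ |ξ|`, and every finitely supported `k` arises from exactly one `π`. So the
coefficient of `t^a q^b` on the left is `Σ_k Π_ξ 1 / k_ξ!` over the multiplicity functions `k`
with `Σ k_ξ = a` and `Σ k_ξ |ξ| = b`. On the right, up to degree `b` the series `M_{n-1}(q) - 1`
is the polynomial `Σ_{0 < |ξ| ≤ b} q^{|ξ|}`, and the multinomial theorem writes the coefficient of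
`q^b` in its `a`-th power as `Σ_k a! / Π_ξ k_ξ!` over the same `k`.
-/

open PowerSeries in
theorem PowerSeries.coeff_pow_eq_of_coeff_eq {R : Type*} [CommSemiring R] {f g : R⟦X⟧} {b : ℕ}
    (h : ∀ i ≤ b, coeff i f = coeff i g) (a : ℕ) : coeff b (f ^ a) = coeff b (g ^ a) := by
  have htrunc : trunc (b + 1) f = trunc (b + 1) g := by
    ext i
    simp only [coeff_trunc]
    split_ifs with hi
    exacts [h i (Nat.lt_succ_iff.1 hi), rfl]
  rw [← coeff_coe_trunc_of_lt (Nat.lt_succ_self b), ← trunc_trunc_pow, htrunc, trunc_trunc_pow,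
    coeff_coe_trunc_of_lt (Nat.lt_succ_self b)]

open PowerSeries in
theorem PowerSeries.coeff_sum_X_pow_pow {R ι : Type*} [CommSemiring R] [DecidableEq ι]
    (s : Finset ι) (d : ι → ℕ) (a b : ℕ) :
    coeff b ((∑ i ∈ s, (X : R⟦X⟧) ^ d i) ^ a) =
      ∑ k ∈ s.piAntidiag a with ∑ i ∈ s, k i * d i = b, (Nat.multinomial s k : R) := by
  rw [Finset.sum_pow_eq_sum_piAntidiag, map_sum, Finset.sum_filter]
  refine Finset.sum_congr rfl fun k _ => ?_
  simp_rw [← pow_mul]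
  rw [Finset.prod_pow_eq_pow_sum, ← map_natCast (C (R := R)), coeff_C_mul_X_pow]
  simp only [mul_comm, eq_comm]

theorem Nat.one_div_factorial_mul_multinomial {ι K : Type*} [Field K] [CharZero K]
    (s : Finset ι) (k : ι → ℕ) :
    (1 / (∑ i ∈ s, k i).factorial : K) * multinomial s k = ∏ i ∈ s, 1 / ((k i).factorial : K) := by
  have hM : (multinomial s k : K) ≠ 0 := by exact_mod_cast (multinomial_pos s k).ne'
  rw [← Nat.multinomial_spec s k, Nat.cast_mul, Nat.cast_prod]
  field_simp
  rw [Finset.prod_div_distrib, Finset.prod_const_one]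

namespace NPartition

variable {n : ℕ}

theorem ext {π π' : NPartition n} (h : π.toFun = π'.toFun) : π = π' := by
  cases π; cases π'; simpa using h

noncomputable instance : DecidableEq (NPartition n) := Classical.decEq _

theorem toFun_le_size (π : NPartition n) (i : Fin n → ℕ) : π.toFun i ≤ π.size :=
  single_le_finsum i π.finite fun _ => Nat.zero_le _

theorem size_eq_zero_iff {π : NPartition n} : π.size = 0 ↔ π.toFun = 0 :=
  ⟨fun h => funext fun i => Nat.eq_zero_of_le_zero (h ▸ π.toFun_le_size i),
    fun h => by rw [size, h]; exact finsum_zero⟩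

theorem card_support_le_size (π : NPartition n) : π.finite.toFinset.card ≤ π.size := by
  rw [size, finsum_eq_sum _ π.finite]
  simpa using Finset.card_nsmul_le_sum _ π.toFun 1 fun i hi =>
    Nat.one_le_iff_ne_zero.2 (π.finite.mem_toFinset.1 hi)

/-- Lowering the `a`-th coordinate of `i` gives `i a + 1` distinct points of the support. -/
theorem lt_size_of_toFun_ne_zero {π : NPartition n} {i : Fin n → ℕ} (hi : π.toFun i ≠ 0)
    (a : Fin n) : i a < π.size := by
  have hline : ∀ t ∈ Finset.range (i a + 1), Function.update i a t ∈ π.finite.toFinset := by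
    intro t ht
    rw [Set.Finite.mem_toFinset, Function.mem_support]
    refine Nat.pos_iff_ne_zero.1 (lt_of_lt_of_le (Nat.pos_iff_ne_zero.2 hi) (π.antitone ?_))
    intro c
    rcases eq_or_ne c a with rfl | hc
    · simpa using Finset.mem_range_succ_iff.1 ht
    · simp [Function.update_of_ne hc]
  calc i a < (Finset.range (i a + 1)).card := by simp
    _ ≤ π.finite.toFinset.card := Finset.card_le_card_of_injOn _ hline fun s _ t _ hst => by
        simpa using congrFun hst a
    _ ≤ π.size := π.card_support_le_size

theorem finite_setOf_size_le (n b : ℕ) : {π : NPartition n | π.size ≤ b}.Finite := by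
  let restrict (π : {π : NPartition n | π.size ≤ b}) : (Fin n → Fin (b + 1)) → Fin (b + 1) :=
    fun i => ⟨π.1.toFun (fun a => i a), Nat.lt_succ_of_le ((π.1.toFun_le_size _).trans π.2)⟩
  have hinj : Function.Injective restrict := by
    rintro ⟨π, hπ⟩ ⟨π', hπ'⟩ h
    refine Subtype.ext (ext (funext fun i => ?_))
    by_cases hbox : ∀ a, i a ≤ b
    · simpa [restrict] using
        congrArg Fin.val (congrFun h fun a => ⟨i a, Nat.lt_succ_of_le (hbox a)⟩)
    · obtain ⟨a, ha⟩ := not_forall.1 hbox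
      have h0 : ∀ ρ : NPartition n, ρ.size ≤ b → ρ.toFun i = 0 := fun ρ hρ =>
        not_not.1 fun hne => ha ((ρ.lt_size_of_toFun_ne_zero hne a).le.trans hρ)
      rw [h0 π hπ, h0 π' hπ']
  exact Set.finite_coe_iff.1 (Finite.of_injective restrict hinj)

theorem one_le_toFun_zero {π : NPartition n} (h : π.toFun ≠ 0) : 1 ≤ π.toFun 0 := by
  obtain ⟨i, hi⟩ := Function.ne_iff.1 h
  exact Nat.one_le_iff_ne_zero.2 fun h0 =>
    hi (Nat.eq_zero_of_le_zero (h0 ▸ π.antitone fun a => Nat.zero_le (i a)))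

theorem one_le_size {π : NPartition n} (h : π.toFun ≠ 0) : 1 ≤ π.size :=
  (one_le_toFun_zero h).trans (π.toFun_le_size 0)

theorem finite_setOf_lt_toFun (π : NPartition n) :
    {p : (Fin n → ℕ) × ℕ | p.2 < π.toFun p.1}.Finite :=
  (π.finite.prod (Set.finite_Iio (π.toFun 0))).subset fun p hp =>
    ⟨Nat.pos_iff_ne_zero.1 (Nat.zero_lt_of_lt hp),
      lt_of_lt_of_le hp (π.antitone fun a => Nat.zero_le (p.1 a))⟩

theorem card_size_eq_zero : Nat.card {π : NPartition n // π.size = 0} = 1 := by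
  have : Unique {π : NPartition n // π.size = 0} :=
    { default := ⟨⟨0, fun _ _ _ => le_rfl, by simp⟩, finsum_zero⟩
      uniq := fun π => Subtype.ext (ext (by rw [size_eq_zero_iff.1 π.2])) }
  exact Nat.card_unique

end NPartition

section BinaryRepresentation

open Function

variable {m : ℕ} (hm : 1 ≤ m + 1)

theorem binFun_apply (ξ : NPartition m) (j : Fin (m + 1) → ℕ) :
    binFun (m + 1) hm ξ j = if j (Fin.last m) < ξ.toFun (Fin.init j) then 1 else 0 :=
  rfl

theorem binFun_antitone (ξ : NPartition m) {i j : Fin (m + 1) → ℕ} (hij : ∀ a, i a ≤ j a) :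
    binFun (m + 1) hm ξ j ≤ binFun (m + 1) hm ξ i := by
  have hinit : ξ.toFun (Fin.init j) ≤ ξ.toFun (Fin.init i) := ξ.antitone fun a => hij _
  have hlast := hij (Fin.last m)
  simp only [binFun_apply]
  split_ifs <;> omega

theorem binFun_zero {ξ : NPartition m} (hξ : ξ.toFun ≠ 0) : binFun (m + 1) hm ξ 0 = 1 :=
  if_pos (NPartition.one_le_toFun_zero hξ)

def snocEquiv (m : ℕ) : (Fin m → ℕ) × ℕ ≃ (Fin (m + 1) → ℕ) :=
  (Equiv.prodComm _ _).trans (Fin.snocEquiv fun _ => ℕ)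

theorem binFun_snocEquiv (ξ : NPartition m) (p : (Fin m → ℕ) × ℕ) :
    binFun (m + 1) hm ξ (snocEquiv m p) = if p.2 < ξ.toFun p.1 then 1 else 0 := by
  change binFun (m + 1) hm ξ (Fin.snoc p.1 p.2) = _
  simp [binFun_apply]

theorem support_binFun_comp_snocEquiv (ξ : NPartition m) :
    support (fun p => binFun (m + 1) hm ξ (snocEquiv m p)) = {p | p.2 < ξ.toFun p.1} := by
  ext p
  simp [binFun_snocEquiv]

theorem support_binFun_finite (ξ : NPartition m) : (support (binFun (m + 1) hm ξ)).Finite := by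
  have h := ξ.finite_setOf_lt_toFun.image (snocEquiv m)
  rwa [← support_binFun_comp_snocEquiv hm, ← Function.comp_def, support_comp_eq_preimage,
    Equiv.image_preimage] at h

theorem finsum_binFun (ξ : NPartition m) : ∑ᶠ j, binFun (m + 1) hm ξ j = ξ.size := by
  have hfin : (support fun p => binFun (m + 1) hm ξ (snocEquiv m p)).Finite := by
    rw [support_binFun_comp_snocEquiv hm]; exact ξ.finite_setOf_lt_toFun
  rw [← finsum_comp_equiv (snocEquiv m), finsum_curry _ hfin]
  refine finsum_congr fun h => ?_
  simp only [binFun_snocEquiv]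
  rw [finsum_eq_sum_of_support_subset _ (s := Finset.range (ξ.toFun h))
    fun l hl => by simpa using hl, Finset.sum_ite_of_true fun l hl => Finset.mem_range.1 hl]
  simp

end BinaryRepresentation

section Decomposition

open Function

variable {m : ℕ} (hm : 1 ≤ m + 1)

/-- Written with `m + 1 - 1` so that it is syntactically the index type of `Cset (m + 1)`. -/
abbrev NonzeroPart (m : ℕ) : Type := {ξ : NPartition (m + 1 - 1) // ξ.toFun ≠ 0}

noncomputable def binCombination (w : NonzeroPart m → ℕ) (hw : (support w).Finite) :
    NPartition (m + 1) where
  toFun j := ∑ ξ ∈ hw.toFinset, w ξ * binFun (m + 1) hm ξ.1 j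
  antitone _ _ hij :=
    Finset.sum_le_sum fun ξ _ => Nat.mul_le_mul_left _ (binFun_antitone hm ξ.1 hij)
  finite := (hw.biUnion fun ξ _ => support_binFun_finite hm ξ.1).subset fun j hj => by
    obtain ⟨ξ, hξ, hne⟩ := Finset.exists_ne_zero_of_sum_ne_zero hj
    exact Set.mem_biUnion (hw.mem_toFinset.1 hξ) (right_ne_zero_of_mul hne)

variable {w : NonzeroPart m → ℕ} (hw : (support w).Finite)

theorem binCombination_toFun (j : Fin (m + 1) → ℕ) :
    (binCombination hm w hw).toFun j = ∑ᶠ ξ, w ξ * binFun (m + 1) hm ξ.1 j :=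
  (finsum_eq_sum_of_support_subset _ (by
    rw [hw.coe_toFinset]; exact support_mul_subset_left _ _)).symm

theorem binCombination_toFun_zero : (binCombination hm w hw).toFun 0 = ∑ᶠ ξ, w ξ := by
  rw [finsum_eq_sum _ hw]
  exact Finset.sum_congr rfl fun ξ _ => by rw [binFun_zero hm ξ.2, mul_one]

theorem binCombination_size : (binCombination hm w hw).size = ∑ᶠ ξ, w ξ * ξ.1.size := by
  rw [finsum_eq_sum_of_support_subset _ (s := hw.toFinset) (by
    rw [hw.coe_toFinset]; exact support_mul_subset_left _ _)]
  change ∑ᶠ j, ∑ ξ ∈ hw.toFinset, w ξ * binFun (m + 1) hm ξ.1 j = _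
  rw [finsum_sum_comm _ _ fun ξ _ =>
    (support_binFun_finite hm ξ.1).subset (support_mul_subset_right _ _)]
  exact Finset.sum_congr rfl fun ξ _ => by rw [← mul_finsum, finsum_binFun]

theorem mem_cset_iff {π : NPartition (m + 1)} :
    w ∈ Cset (m + 1) hm π ↔ ∃ hw : (support w).Finite, binCombination hm w hw = π := by
  refine ⟨fun ⟨hw, hπ⟩ => ⟨hw, NPartition.ext (funext fun j => ?_)⟩, ?_⟩
  · rw [binCombination_toFun, hπ]
  · rintro ⟨hw, rfl⟩
    exact ⟨hw, binCombination_toFun hm hw⟩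

theorem pairwise_disjoint_cset : Pairwise (Disjoint on Cset (m + 1) hm) := fun π π' hne =>
  Set.disjoint_left.2 fun w hw hw' => by
    obtain ⟨_, rfl⟩ := (mem_cset_iff hm).1 hw
    obtain ⟨_, rfl⟩ := (mem_cset_iff hm).1 hw'
    exact hne rfl

end Decomposition

section Multiplicities

open Function

variable {m : ℕ}

noncomputable def partsUpTo (m b : ℕ) : Finset (NonzeroPart m) :=
  ((NPartition.finite_setOf_size_le (m + 1 - 1) b).preimage Subtype.val_injective.injOn).toFinset

theorem mem_partsUpTo {b : ℕ} {ξ : NonzeroPart m} : ξ ∈ partsUpTo m b ↔ ξ.1.size ≤ b := by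
  simp only [partsUpTo, Set.Finite.mem_toFinset]; rfl

/-- Only parts of size at most `b` can occur, so this finset is the set described by
`mem_multiplicities_iff`. -/
noncomputable def multiplicities (m a b : ℕ) : Finset (NonzeroPart m → ℕ) :=
  {k ∈ (partsUpTo m b).piAntidiag a | ∑ ξ ∈ partsUpTo m b, k ξ * ξ.1.size = b}

theorem support_subset_partsUpTo {k : NonzeroPart m → ℕ} (hk : (support k).Finite) :
    support k ⊆ partsUpTo m (∑ᶠ ξ, k ξ * ξ.1.size) := fun ξ hξ =>
  mem_partsUpTo.2 <| calc
    ξ.1.size ≤ k ξ * ξ.1.size := Nat.le_mul_of_pos_left _ (Nat.pos_of_ne_zero hξ)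
    _ ≤ ∑ᶠ ξ, k ξ * ξ.1.size :=
      single_le_finsum (f := fun ξ => k ξ * ξ.1.size) ξ
        (hk.subset (support_mul_subset_left _ _)) fun _ => Nat.zero_le _

theorem mem_multiplicities_iff {a b : ℕ} {k : NonzeroPart m → ℕ} :
    k ∈ multiplicities m a b ↔
      (support k).Finite ∧ ∑ᶠ ξ, k ξ = a ∧ ∑ᶠ ξ, k ξ * ξ.1.size = b := by
  have hsum {s : Finset (NonzeroPart m)} (hs : support k ⊆ s) :
      (∑ᶠ ξ, k ξ = ∑ ξ ∈ s, k ξ) ∧ ∑ᶠ ξ, k ξ * ξ.1.size = ∑ ξ ∈ s, k ξ * ξ.1.size :=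
    ⟨finsum_eq_sum_of_support_subset _ hs,
      finsum_eq_sum_of_support_subset _ ((support_mul_subset_left _ _).trans hs)⟩
  rw [multiplicities, Finset.mem_filter, Finset.mem_piAntidiag]
  constructor
  · rintro ⟨⟨ha, hs⟩, hb⟩
    obtain ⟨h1, h2⟩ := hsum (s := partsUpTo m b) hs
    exact ⟨(partsUpTo m b).finite_toSet.subset hs, h1.trans ha, h2.trans hb⟩
  · rintro ⟨hk, rfl, rfl⟩
    have hs := support_subset_partsUpTo hk
    obtain ⟨h1, h2⟩ := hsum hs
    exact ⟨⟨h1.symm, hs⟩, h2.symm⟩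

variable (hm : 1 ≤ m + 1)

theorem biUnion_cset (a b : ℕ) :
    ⋃ π ∈ {π : NPartition (m + 1) | π.toFun 0 = a ∧ π.size = b}, Cset (m + 1) hm π =
      multiplicities m a b := by
  ext k
  simp only [Set.mem_iUnion, exists_prop, mem_cset_iff, Finset.mem_coe,
    mem_multiplicities_iff]
  constructor
  · rintro ⟨π, ⟨rfl, rfl⟩, hk, rfl⟩
    exact ⟨hk, (binCombination_toFun_zero hm hk).symm, (binCombination_size hm hk).symm⟩
  · rintro ⟨hk, ha, hb⟩
    exact ⟨_, ⟨binCombination_toFun_zero hm hk ▸ ha, binCombination_size hm hk ▸ hb⟩, hk, rfl⟩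

theorem finite_cset (π : NPartition (m + 1)) : (Cset (m + 1) hm π).Finite :=
  (multiplicities m (π.toFun 0) π.size).finite_toSet.subset <| biUnion_cset hm _ _ ▸
    Set.subset_biUnion_of_mem (u := Cset (m + 1) hm) (show π ∈ _ from ⟨rfl, rfl⟩)

theorem finsum_omegaC (a b : ℕ) :
    ∑ᶠ π ∈ {π : NPartition (m + 1) | π.toFun 0 = a ∧ π.size = b}, omegaC (m + 1) hm π =
      ∑ k ∈ multiplicities m a b, ∏ ξ ∈ partsUpTo m b, (1 / (k ξ).factorial : ℚ) := by
  have hfin : {π : NPartition (m + 1) | π.toFun 0 = a ∧ π.size = b}.Finite :=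
    (NPartition.finite_setOf_size_le (m + 1) b).subset fun π hπ => hπ.2.le
  simp only [omegaC]
  rw [← finsum_mem_biUnion ((pairwise_disjoint_cset hm).set_pairwise _) hfin
    fun π _ => finite_cset hm π, biUnion_cset, finsum_mem_coe_finset]
  refine Finset.sum_congr rfl fun k hk => finprod_eq_prod_of_mulSupport_subset _ fun ξ hξ =>
    (Finset.mem_piAntidiag.1 (Finset.mem_filter.1 hk).1).2 ξ fun h0 => hξ (by simp [h0])

end Multiplicities

section GeneratingSeries

open PowerSeries

variable {m : ℕ}

theorem coeff_mser_sub_one {b i : ℕ} (hi : i ≤ b) :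
    coeff i (Mser (m + 1 - 1) - 1) = coeff i (∑ ξ ∈ partsUpTo m b, (X : ℚ⟦X⟧) ^ ξ.1.size) := by
  simp only [map_sub, Mser, coeff_mk, coeff_one, map_sum, coeff_X_pow]
  rw [Finset.sum_boole]
  rcases Nat.eq_zero_or_pos i with rfl | hpos
  · rw [NPartition.card_size_eq_zero, Finset.filter_false_of_mem
      fun (ξ : NonzeroPart m) _ (h : 0 = ξ.1.size) =>
        Nat.one_ne_zero (Nat.le_zero.1 (h ▸ NPartition.one_le_size ξ.2))]
    simp
  · have e : {ξ : NonzeroPart m // ξ ∈ (partsUpTo m b).filter fun ξ => i = ξ.1.size} ≃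
        {π : NPartition (m + 1 - 1) // π.size = i} :=
      (Equiv.subtypeEquivRight fun ξ => by
        rw [Finset.mem_filter, mem_partsUpTo, eq_comm, and_iff_right_iff_imp]
        exact fun h => h ▸ hi).trans
      (Equiv.subtypeSubtypeEquivSubtype fun {π} (hπ : π.size = i) h0 =>
        hpos.ne' (hπ ▸ NPartition.size_eq_zero_iff.2 h0))
    rw [if_neg hpos.ne', sub_zero, ← Nat.card_eq_finsetCard, Nat.card_congr e]

theorem coeff_pow_mser_sub_one (a b : ℕ) :
    coeff b ((Mser (m + 1 - 1) - 1) ^ a) =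
      ∑ k ∈ multiplicities m a b, (Nat.multinomial (partsUpTo m b) k : ℚ) := by
  rw [coeff_pow_eq_of_coeff_eq (fun i hi => coeff_mser_sub_one hi), coeff_sum_X_pow_pow]
  rfl

end GeneratingSeries

theorem stmt_14 (n : ℕ) (hn : 1 ≤ n) :
    (PowerSeries.mk fun a => PowerSeries.mk fun b =>
        ∑ᶠ π ∈ {π : NPartition n | π.toFun 0 = a ∧ π.size = b}, omegaC n hn π) =
      (PowerSeries.mk fun a =>
        PowerSeries.C (1 / (Nat.factorial a) : ℚ) * (Mser (n - 1) - 1) ^ a :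
        PowerSeries (PowerSeries ℚ)) := by
  obtain ⟨m, rfl⟩ : ∃ m, n = m + 1 := ⟨n - 1, by omega⟩
  ext a b
  rw [PowerSeries.coeff_mk, PowerSeries.coeff_mk, PowerSeries.coeff_mk, PowerSeries.coeff_C_mul,
    coeff_pow_mser_sub_one, finsum_omegaC, Finset.mul_sum]
  refine Finset.sum_congr rfl fun k hk => ?_
  rw [← (Finset.mem_piAntidiag.1 (Finset.mem_filter.1 hk).1).1,
    Nat.one_div_factorial_mul_multinomial]
end
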